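/- arXiv:2311.13738 — 2 statements merged into one kernel-verified Lean document; each statement's English description precedes it below -/
import Mathlib

section
/- At any KKT point, the auxiliary variables enforce truncation: Let δ ∈ (0,1) and let (y,z) ∈ [0,1]^{3n−4} be a KKT point of the polynomial p constructed from the truncated-linear program. Then for every i ∈ {3,…,n}: trunc(Σ_{j<i} a_{ij} y_j + c_i) = Σ_{j<i} a_{ij} y_j + c_i − K z_i^+ + K z_i^−. -/
/-!
The partial derivatives of `p` in `z_i⁺` and `z_i⁻` are the positive multiples `2Kδ^i` of
`1 + K z_i⁺ - s_i` and `K z_i⁻ + s_i`, where `s_i = Σ_{j<i} a_{ij} y_j + c_i`, because only `q_i`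
involves these variables. The KKT sign conditions thus become complementarity conditions which,
since `|s_i| ≤ K`, force `K z_i⁺ = max 0 (s_i - 1)` and `K z_i⁻ = max 0 (-s_i)`; that is, the
correction `- K z_i⁺ + K z_i⁻` turns `s_i` into its truncation.
-/

noncomputable section

/-- Truncation to the unit interval. -/
def trunc (z : ℝ) : ℝ := min 1 (max 0 z)

/-- The term `q_i` of the quadratic polynomial, implementing the `i`-th gate. -/
def qval (K : ℝ) (a : ℕ → ℕ → ℝ) (c : ℕ → ℝ) (i : ℕ) (y zp zm : ℕ → ℝ) : ℝ :=
  (y i + K * zp i - K * zm i - (∑ j ∈ Finset.Ico 1 i, a i j * y j) - c i) ^ 2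
    + 2 * K ^ 2 * zp i * zm i + 2 * K * zp i * (1 - y i) + 2 * K * zm i * y i

/-- The quadratic polynomial `p(y,z) = δ^{n+1} y_n + Σ_{i=3}^n δ^i q_i(y,z)`. -/
def pval (n : ℕ) (K δ : ℝ) (a : ℕ → ℕ → ℝ) (c : ℕ → ℝ) (y zp zm : ℕ → ℝ) : ℝ :=
  δ ^ (n + 1) * y n + ∑ i ∈ Finset.Icc 3 n, δ ^ i * qval K a c i y zp zm

/-- The partial derivative `∂p/∂y_k`. -/
def dpy (n : ℕ) (K δ : ℝ) (a : ℕ → ℕ → ℝ) (c : ℕ → ℝ) (k : ℕ) (y zp zm : ℕ → ℝ) : ℝ :=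
  deriv (fun t => pval n K δ a c (Function.update y k t) zp zm) (y k)

/-- The partial derivative `∂p/∂z_k⁺`. -/
def dpzp (n : ℕ) (K δ : ℝ) (a : ℕ → ℕ → ℝ) (c : ℕ → ℝ) (k : ℕ) (y zp zm : ℕ → ℝ) : ℝ :=
  deriv (fun t => pval n K δ a c y (Function.update zp k t) zm) (zp k)

/-- The partial derivative `∂p/∂z_k⁻`. -/
def dpzm (n : ℕ) (K δ : ℝ) (a : ℕ → ℕ → ℝ) (c : ℕ → ℝ) (k : ℕ) (y zp zm : ℕ → ℝ) : ℝ :=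
  deriv (fun t => pval n K δ a c y zp (Function.update zm k t)) (zm k)

/-- `(y, z⁺, z⁻) ∈ [0,1]^{3n−4}` is a KKT point of the minimization of `p` over the box. -/
def IsKKT (n : ℕ) (K δ : ℝ) (a : ℕ → ℕ → ℝ) (c : ℕ → ℝ) (y zp zm : ℕ → ℝ) : Prop :=
  (∀ i, 1 ≤ i → i ≤ n → y i ∈ Set.Icc (0 : ℝ) 1) ∧
  (∀ i, 3 ≤ i → i ≤ n → zp i ∈ Set.Icc (0 : ℝ) 1 ∧ zm i ∈ Set.Icc (0 : ℝ) 1) ∧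
  (∀ i, 1 ≤ i → i ≤ n →
    (0 < y i → dpy n K δ a c i y zp zm ≤ 0) ∧ (y i < 1 → 0 ≤ dpy n K δ a c i y zp zm)) ∧
  (∀ i, 3 ≤ i → i ≤ n →
    ((0 < zp i → dpzp n K δ a c i y zp zm ≤ 0) ∧ (zp i < 1 → 0 ≤ dpzp n K δ a c i y zp zm)) ∧
    ((0 < zm i → dpzm n K δ a c i y zp zm ≤ 0) ∧ (zm i < 1 → 0 ≤ dpzm n K δ a c i y zp zm)))

open Finset Function

lemma trunc_eq_of_complementarity {K s u v : ℝ} (hK : 0 ≤ K) (hs : s ∈ Set.Icc (-K) (1 + K))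
    (hu : u ∈ Set.Icc (0 : ℝ) 1) (hv : v ∈ Set.Icc (0 : ℝ) 1)
    (hu_pos : 0 < u → 1 + K * u - s ≤ 0) (hu_lt : u < 1 → 0 ≤ 1 + K * u - s)
    (hv_pos : 0 < v → K * v + s ≤ 0) (hv_lt : v < 1 → 0 ≤ K * v + s) :
    trunc s = s - K * u + K * v := by
  obtain ⟨hu0, hu1⟩ := hu
  obtain ⟨hv0, hv1⟩ := hv
  have hKu : 0 ≤ K * u := mul_nonneg hK hu0
  have hKv : 0 ≤ K * v := mul_nonneg hK hv0
  rcases hu0.eq_or_lt with rfl | hu0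
  · rcases hv0.eq_or_lt with rfl | hv0
    · have h0 := hv_lt one_pos
      have h1 := hu_lt one_pos
      simp only [mul_zero, zero_add, add_zero, sub_zero] at h0 h1 ⊢
      rw [trunc, max_eq_right h0, min_eq_right (by linarith)]
    · have hs_eq : s = -(K * v) := by
        rcases hv1.lt_or_eq with hv1 | rfl
        · linarith [hv_pos hv0, hv_lt hv1]
        · linarith [hv_pos hv0, hs.1]
      rw [trunc, max_eq_left (by linarith), min_eq_right zero_le_one]
      linarith
  · obtain rfl : 0 = v :=
      hv0.eq_or_lt.resolve_right fun hv0 => by linarith [hu_pos hu0, hv_pos hv0]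
    have hs_eq : s = 1 + K * u := by
      rcases hu1.lt_or_eq with hu1 | rfl
      · linarith [hu_pos hu0, hu_lt hu1]
      · linarith [hu_pos hu0, hs.2]
    rw [trunc, max_eq_right (by linarith), min_eq_left (by linarith)]
    linarith

lemma hasDerivAt_sq_affine_add (p K q r x : ℝ) :
    HasDerivAt (fun t => (p + K * t) ^ 2 + q * t + r) (2 * K * (p + K * x) + q) x := by
  have hlin (m : ℝ) : HasDerivAt (fun t => m * t) m x := by
    simpa using (hasDerivAt_id' x).const_mul m
  refine ((((hlin K).const_add p).fun_pow 2).fun_add (hlin q)).add_const r |>.congr_deriv ?_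
  norm_num
  ring

lemma abs_sum_mul_add_le {ι : Type*} (s : Finset ι) (a y : ι → ℝ) (c : ℝ)
    (hy : ∀ j ∈ s, |y j| ≤ 1) :
    |∑ j ∈ s, a j * y j + c| ≤ ∑ j ∈ s, |a j| + |c| := by
  calc |∑ j ∈ s, a j * y j + c| ≤ ∑ j ∈ s, |a j * y j| + |c| := by
        grw [abs_add_le, abs_sum_le_sum_abs]
    _ ≤ ∑ j ∈ s, |a j| + |c| := by
        gcongr ?_ + _
        refine sum_le_sum fun j hj => ?_
        rw [abs_mul]
        exact mul_le_of_le_one_right (abs_nonneg _) (hy j hj)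

section Partials

variable {n k : ℕ} {K δ : ℝ} {a : ℕ → ℕ → ℝ} {c : ℕ → ℝ} {y zp zm : ℕ → ℝ}

lemma hasDerivAt_pval_of_hasDerivAt_qval (hk : k ∈ Icc 3 n) {Zp Zm : ℝ → ℕ → ℝ}
    (hZp : ∀ t, ∀ i ≠ k, Zp t i = zp i) (hZm : ∀ t, ∀ i ≠ k, Zm t i = zm i) {D x : ℝ}
    (hq : HasDerivAt (fun t => qval K a c k y (Zp t) (Zm t)) D x) :
    HasDerivAt (fun t => pval n K δ a c y (Zp t) (Zm t)) (δ ^ k * D) x := by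
  have hterm : ∀ i ∈ Icc 3 n, HasDerivAt (fun t => δ ^ i * qval K a c i y (Zp t) (Zm t))
      (if i = k then δ ^ k * D else 0) x := by
    intro i _
    split_ifs with hik
    · subst hik
      exact hq.const_mul _
    · simp only [qval, hZp _ i hik, hZm _ i hik]
      exact hasDerivAt_const _ _
  refine ((hasDerivAt_const x (δ ^ (n + 1) * y n)).add (HasDerivAt.fun_sum hterm)).congr_deriv ?_
  simp [hk]

lemma dpzp_eq (hk : k ∈ Icc 3 n) :
    dpzp n K δ a c k y zp zm
      = 2 * K * δ ^ k * (1 + K * zp k - (∑ j ∈ Ico 1 k, a k j * y j + c k)) := by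
  have hq : HasDerivAt (fun t => qval K a c k y (update zp k t) zm)
      (2 * K * (1 + K * zp k - (∑ j ∈ Ico 1 k, a k j * y j + c k))) (zp k) := by
    convert hasDerivAt_sq_affine_add (y k - K * zm k - ∑ j ∈ Ico 1 k, a k j * y j - c k) K
      (2 * K ^ 2 * zm k + 2 * K * (1 - y k)) (2 * K * zm k * y k) (zp k) using 1
    · funext t
      simp only [qval, update_self]
      ring
    · ring
  rw [dpzp, (hasDerivAt_pval_of_hasDerivAt_qval (Zm := fun _ => zm) hk
    (fun t i hi => update_of_ne hi t zp) (fun _ _ _ => rfl) hq).deriv]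
  ring

lemma dpzm_eq (hk : k ∈ Icc 3 n) :
    dpzm n K δ a c k y zp zm
      = 2 * K * δ ^ k * (K * zm k + (∑ j ∈ Ico 1 k, a k j * y j + c k)) := by
  have hq : HasDerivAt (fun t => qval K a c k y zp (update zm k t))
      (2 * K * (K * zm k + (∑ j ∈ Ico 1 k, a k j * y j + c k))) (zm k) := by
    convert hasDerivAt_sq_affine_add (y k + K * zp k - ∑ j ∈ Ico 1 k, a k j * y j - c k) (-K)
      (2 * K ^ 2 * zp k + 2 * K * y k) (2 * K * zp k * (1 - y k)) (zm k) using 1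
    · funext t
      simp only [qval, update_self]
      ring
    · ring
  rw [dpzm, (hasDerivAt_pval_of_hasDerivAt_qval (Zp := fun _ => zp) hk
    (fun _ _ _ => rfl) (fun t i hi => update_of_ne hi t zm) hq).deriv]
  ring

end Partials

theorem kkt_aux_truncation_general (n : ℕ) (a : ℕ → ℕ → ℝ) (c : ℕ → ℝ)
    (K : ℝ) (hK1 : 1 ≤ K)
    (hK : ∀ i, 3 ≤ i → i ≤ n → (∑ j ∈ Finset.Ico 1 i, |a i j|) + |c i| ≤ K)
    (δ : ℝ) (hδ : δ ∈ Set.Ioo (0 : ℝ) 1)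
    (y zp zm : ℕ → ℝ) (hkkt : IsKKT n K δ a c y zp zm) :
    ∀ i, 3 ≤ i → i ≤ n →
      trunc ((∑ j ∈ Finset.Ico 1 i, a i j * y j) + c i)
        = (∑ j ∈ Finset.Ico 1 i, a i j * y j) + c i - K * zp i + K * zm i := by
  intro i hi3 hin
  have hi : i ∈ Icc 3 n := mem_Icc.mpr ⟨hi3, hin⟩
  obtain ⟨hy, hz, -, hstat⟩ := hkkt
  obtain ⟨⟨hzp_pos, hzp_lt⟩, hzm_pos, hzm_lt⟩ := hstat i hi3 hin
  rw [dpzp_eq hi] at hzp_pos hzp_lt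
  rw [dpzm_eq hi] at hzm_pos hzm_lt
  have hscale : 0 < 2 * K * δ ^ i := mul_pos (by linarith) (pow_pos hδ.1 i)
  have hs : |∑ j ∈ Ico 1 i, a i j * y j + c i| ≤ K := by
    refine (abs_sum_mul_add_le _ _ _ _ fun j hj => ?_).trans (hK i hi3 hin)
    obtain ⟨hj1, hji⟩ := mem_Ico.mp hj
    obtain ⟨hyj0, hyj1⟩ := hy j hj1 (by omega)
    exact abs_le.mpr ⟨by linarith, hyj1⟩
  obtain ⟨hs_lo, hs_hi⟩ := abs_le.mp hs
  refine trunc_eq_of_complementarity (by linarith) ⟨hs_lo, by linarith⟩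
    (hz i hi3 hin).1 (hz i hi3 hin).2
    (fun h => nonpos_of_mul_nonpos_right (hzp_pos h) hscale)
    (fun h => nonneg_of_mul_nonneg_right (hzp_lt h) hscale)
    (fun h => nonpos_of_mul_nonpos_right (hzm_pos h) hscale)
    (fun h => nonneg_of_mul_nonneg_right (hzm_lt h) hscale)

/-- At any KKT point, the auxiliary variables enforce truncation. -/
theorem kkt_aux_truncation (n : ℕ) (hn : 3 ≤ n) (a : ℕ → ℕ → ℝ) (c : ℕ → ℝ)
    (K : ℝ) (hK1 : 1 ≤ K)
    (hK : ∀ i, 3 ≤ i → i ≤ n → (∑ j ∈ Finset.Ico 1 i, |a i j|) + |c i| ≤ K)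
    (δ : ℝ) (hδ : δ ∈ Set.Ioo (0 : ℝ) 1)
    (y zp zm : ℕ → ℝ) (hkkt : IsKKT n K δ a c y zp zm) :
    ∀ i, 3 ≤ i → i ≤ n →
      trunc ((∑ j ∈ Finset.Ico 1 i, a i j * y j) + c i)
        = (∑ j ∈ Finset.Ico 1 i, a i j * y j) + c i - K * zp i + K * zm i :=
  kkt_aux_truncation_general n a c K hK1 hK δ hδ y zp zm hkkt
end
end

section
/- Correctness of perturbed bit multiplication: For x ∈ ℝ, b ∈ {0,1} and a perturbation π ∈ ℝ, define BM(x, b; π) = 4·(1−b) + max(−4, x − 8·(1−b) + π). If x ∈ [−2, 2] and π ∈ (−1, 1), then: if b = 0 then BM(x, b; π) = 0, and if b = 1 then BM(x, b; π) = x + π. -/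
/-- The perturbed bit-multiplication gadget: `BM(x, b; π) = 4(1−b) + max(−4, x − 8(1−b) + π)`. -/
noncomputable def BM (x b π : ℝ) : ℝ := 4 * (1 - b) + max (-4) (x - 8 * (1 - b) + π)

/-- Correctness of perturbed bit multiplication. -/
theorem bitMultiply_correct (x b π : ℝ)
    (hx : x ∈ Set.Icc (-2 : ℝ) 2) (hb : b = 0 ∨ b = 1)
    (hπ : π ∈ Set.Ioo (-1 : ℝ) 1) :
    (b = 0 → BM x b π = 0) ∧ (b = 1 → BM x b π = x + π) := by
  obtain ⟨hx1, hx2⟩ := hx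
  obtain ⟨hp1, hp2⟩ := hπ
  constructor
  · rintro rfl
    unfold BM
    rw [max_eq_left (by linarith)]
    ring
  · rintro rfl
    unfold BM
    rw [max_eq_right (by linarith)]
    ring
end
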